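/- arXiv:1009.4813 — 2 statements merged into one kernel-verified Lean document; each statement's English description precedes it below -/
import Mathlib

section
/- Let ρ > 1 and let E_ρ ⊂ ℂ be the open region bounded by the ellipse with foci ±1 given parametrically by θ ↦ (ρ e^{iθ} + ρ^{−1} e^{−iθ})/2, θ ∈ [0, 2π] (the canonical ellipse of index ρ relative to the segment [−1,1]); note [−1,1] ⊂ E_ρ. Let f be holomorphic on E_ρ. Then the Fourier–Chebyshev series of f, namely (1/π)·(∫_{−1}^{1} f(x)(1−x²)^{−1/2} dx) + Σ_{k=1}^{∞} (2/π)·(∫_{−1}^{1} f(x) T_k(x) (1−x²)^{−1/2} dx)·T_k(z), converges to f(z) locally uniformly (i.e., uniformly on every compact subset) of E_ρ, where T_k(z) denotes the value at z ∈ ℂ of the k-th Chebyshev polynomial of the first kind. -/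
/-!
Write `J w = (w + w⁻¹) / 2`; then `g = f ∘ J` is holomorphic on the annulus `ρ⁻¹ < ‖w‖ < ρ` and
invariant under `w ↦ w⁻¹`. For `1 ≤ ‖u‖ < r < ρ`, the Cauchy formula on the annulus
`r⁻¹ ≤ ‖w‖ ≤ r`, with the inner circle carried onto the outer one by `w ↦ w⁻¹`, gives
`2πi f (J u) = ∮_{‖w‖ = r} K_u(w) g(w) dw` with `K_u(w) = (w - u)⁻¹ + (w - u⁻¹)⁻¹ - w⁻¹`.
Expanding `K_u` as geometric series in `u / w` and `u⁻¹ / w` and using `2 T_k(J u) = uᵏ + u⁻ᵏ`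
yields the terms `ε_k T_k(J u) w⁻ᵏ⁻¹` (`ε₀ = 1`, `ε_k = 2` for `k ≥ 1`), whose integrals against
`g` are the Fourier–Chebyshev coefficients (on `‖w‖ = 1` put `w = e^{iθ}`, then `x = cos θ`).
The remainder after `N` terms is `O((s / r)ᴺ)` uniformly for `‖u‖ ≤ s < r`.
-/

open MeasureTheory Polynomial

/-- The open region bounded by the canonical ellipse of index `ρ > 1` with foci `±1`:
the image of the open annulus `ρ⁻¹ < |w| < ρ` under the Joukowski map `w ↦ (w + w⁻¹)/2`;
its boundary is the curve `θ ↦ (ρ e^{iθ} + ρ⁻¹ e^{-iθ})/2`, and it contains `[-1, 1]`. -/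
def canonicalEllipseRegion (ρ : ℝ) : Set ℂ :=
  {z : ℂ | ∃ w : ℂ, ρ⁻¹ < ‖w‖ ∧ ‖w‖ < ρ ∧ z = (w + w⁻¹) / 2}

/-- The `k`-th Fourier–Chebyshev coefficient of `f`:
`c₀ = (1/π) ∫_{-1}^{1} f(x) (1-x²)^{-1/2} dx` and
`c_k = (2/π) ∫_{-1}^{1} f(x) T_k(x) (1-x²)^{-1/2} dx` for `k ≥ 1`. -/
noncomputable def fourierChebyshevCoeff (f : ℂ → ℂ) (k : ℕ) : ℂ :=
  (if k = 0 then (1 : ℂ) / (Real.pi : ℂ) else (2 : ℂ) / (Real.pi : ℂ)) *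
    ∫ x in Set.Ioo (-1 : ℝ) 1,
      f (x : ℂ) * (Polynomial.Chebyshev.T ℂ (k : ℤ)).eval (x : ℂ) /
        (Real.sqrt (1 - x ^ 2) : ℂ)

open Complex Metric Set Filter Topology
open scoped Real

theorem sphere_subset_closedBall_sdiff_ball {X : Type*} [PseudoMetricSpace X] {c : X}
    {r s R : ℝ} (hrs : r ≤ s) (hsR : s ≤ R) : sphere c s ⊆ closedBall c R \ ball c r :=
  fun _ hw => ⟨(mem_sphere.1 hw).trans_le hsR, fun h => (mem_ball.1 h).not_ge
    ((mem_sphere.1 hw).symm ▸ hrs)⟩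

theorem closedBall_sdiff_ball_mem_nhds {X : Type*} [PseudoMetricSpace X] {c z : X} {r R : ℝ}
    (hz : z ∈ ball c R \ closedBall c r) : closedBall c R \ ball c r ∈ 𝓝 z :=
  mem_of_superset ((isOpen_ball.sdiff isClosed_closedBall).mem_nhds hz)
    (sdiff_subset_sdiff ball_subset_closedBall ball_subset_closedBall)

theorem continuousOn_sub_inv_sphere {c a : ℂ} {R : ℝ} (ha : a ∉ sphere c R) :
    ContinuousOn (fun w => (w - a)⁻¹) (sphere c R) :=
  (continuousOn_id.sub continuousOn_const).inv₀ fun w hw h => ha (by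
    rwa [← show w = a from sub_eq_zero.1 h])

section CircleIntegral

variable {E : Type*} [NormedAddCommGroup E] [NormedSpace ℂ E]

theorem circleIntegral_inv_radius (R : ℝ) (h : ℂ → E) :
    (∮ w in C(0, R⁻¹), h w) = ∮ w in C(0, R), (w⁻¹) ^ 2 • h w⁻¹ := by
  rcases eq_or_ne R 0 with rfl | hR
  · simp
  simp only [circleIntegral, deriv_circleMap]
  have hreflect := intervalIntegral.integral_comp_sub_left
    (fun θ => (circleMap 0 R⁻¹ θ * I) • h (circleMap 0 R⁻¹ θ)) (2 * π) (a := 0) (b := 2 * π)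
  rw [sub_self, sub_zero] at hreflect
  rw [← hreflect]
  refine intervalIntegral.integral_congr fun θ _ => ?_
  have hv : circleMap 0 R θ ≠ 0 := circleMap_ne_center hR
  rw [(periodic_circleMap 0 R⁻¹).sub_eq', ← circleMap_zero_inv, smul_smul]
  congr 1
  field_simp

theorem circleIntegral_sub_inv_smul_sub_eq_of_differentiableOn_annulus [CompleteSpace E]
    {c u : ℂ} {r R : ℝ} {g : ℂ → E} (hr : 0 < r) (hru : r < ‖u - c‖) (huR : ‖u - c‖ < R)
    (hg : DifferentiableOn ℂ g (closedBall c R \ ball c r)) :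
    (∮ w in C(c, R), (w - u)⁻¹ • g w) - (∮ w in C(c, r), (w - u)⁻¹ • g w) =
      (2 * π * I : ℂ) • g u := by
  have hG := (differentiableOn_dslope (closedBall_sdiff_ball_mem_nhds
    ⟨mem_ball_iff_norm.2 huR, by simpa [dist_eq_norm] using hru⟩)).2 hg
  have hsplit : ∀ s, r ≤ s → s ≤ R → s ≠ ‖u - c‖ → (∮ w in C(c, s), dslope g u w) =
      (∮ w in C(c, s), (w - u)⁻¹ • g w) - (∮ w in C(c, s), (w - u)⁻¹) • g u := by
    intro s hrs hsR hsu
    have hu : u ∉ sphere c s := by simpa [dist_eq_norm] using hsu.symm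
    have hinv := continuousOn_sub_inv_sphere hu
    have hgs : CircleIntegrable (fun w => (w - u)⁻¹ • g w) c s :=
      (hinv.smul (hg.continuousOn.mono (sphere_subset_closedBall_sdiff_ball hrs hsR)))
        |>.circleIntegrable (hr.le.trans hrs)
    have hgu : CircleIntegrable (fun w => (w - u)⁻¹ • g u) c s :=
      (hinv.smul continuousOn_const).circleIntegrable (hr.le.trans hrs)
    rw [← circleIntegral.integral_smul_const, ← circleIntegral.integral_sub hgs hgu]
    refine circleIntegral.integral_congr (hr.le.trans hrs) fun w hw => ?_
    rw [dslope_of_ne _ (ne_of_mem_of_not_mem hw hu), slope_def_module, smul_sub]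
  have hannulus := circleIntegral_eq_of_differentiable_on_annulus_off_countable hr
    (hru.trans huR).le countable_empty hG.continuousOn
    fun z hz => hG.differentiableAt (closedBall_sdiff_ball_mem_nhds hz.1)
  have hinside : (∮ w in C(c, R), (w - u)⁻¹) = 2 * π * I :=
    circleIntegral.integral_sub_inv_of_mem_ball (mem_ball_iff_norm.2 huR)
  have hu : u ∉ closedBall c r := by simpa [dist_eq_norm] using hru
  have houtside : (∮ w in C(c, r), (w - u)⁻¹) = 0 :=
    ((differentiableOn_id.sub_const u).inv fun w hw => sub_ne_zero.2 (ne_of_mem_of_not_mem hw hu))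
      |>.diffContOnCl_ball subset_rfl |>.circleIntegral_eq_zero hr.le
  rw [hsplit R (hru.trans huR).le le_rfl huR.ne', hsplit r le_rfl (hru.trans huR).le hru.ne,
    hinside, houtside, zero_smul, sub_zero] at hannulus
  rw [← hannulus, sub_sub_cancel]

end CircleIntegral

noncomputable def joukowski (w : ℂ) : ℂ := (w + w⁻¹) / 2

theorem joukowski_inv (w : ℂ) : joukowski w⁻¹ = joukowski w := by
  simp [joukowski, add_comm]

theorem joukowski_exp_mul_I (θ : ℂ) : joukowski (exp (θ * I)) = cos θ := by
  rw [joukowski, ← exp_neg, cos, neg_mul]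

theorem differentiableOn_joukowski : DifferentiableOn ℂ joukowski {0}ᶜ := fun _ hw =>
  ((differentiableAt_id.add (differentiableAt_inv hw)).div_const 2).differentiableWithinAt

theorem Polynomial.Chebyshev.T_eval_joukowski {u : ℂ} (hu : u ≠ 0) (n : ℤ) :
    (T ℂ n).eval (joukowski u) = (u ^ n + u⁻¹ ^ n) / 2 := by
  obtain ⟨θ, rfl⟩ : ∃ θ, exp (θ * I) = u :=
    ⟨-(log u * I), by rw [neg_mul, mul_assoc, I_mul_I, mul_neg_one, neg_neg, exp_log hu]⟩
  rw [joukowski_exp_mul_I, T_complex_cos, cos, ← exp_neg, ← exp_int_mul, ← exp_int_mul]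
  ring_nf

theorem canonicalEllipseRegion_eq_image (ρ : ℝ) :
    canonicalEllipseRegion ρ = joukowski '' (ball 0 ρ \ closedBall 0 ρ⁻¹) := by
  ext z
  simp [canonicalEllipseRegion, joukowski, and_comm, and_assoc, eq_comm]

theorem mem_canonicalEllipseRegion_iff {ρ : ℝ} {z : ℂ} :
    z ∈ canonicalEllipseRegion ρ ↔ ∃ u, 1 ≤ ‖u‖ ∧ ‖u‖ < ρ ∧ joukowski u = z := by
  constructor
  · rintro ⟨w, hρw, hwρ, rfl⟩
    have hw : 0 < ‖w‖ := (inv_pos.2 ((norm_nonneg w).trans_lt hwρ)).trans hρw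
    rcases le_or_gt 1 ‖w‖ with h | h
    · exact ⟨w, h, hwρ, rfl⟩
    · refine ⟨w⁻¹, ?_, ?_, joukowski_inv w⟩ <;> rw [norm_inv]
      · exact (one_le_inv₀ hw).2 h.le
      · exact (inv_lt_comm₀ hw ((norm_nonneg w).trans_lt hwρ)).2 hρw
  · rintro ⟨u, hu, huρ, rfl⟩
    exact ⟨u, (inv_lt_one_of_one_lt₀ (hu.trans_lt huρ)).trans_le hu, huρ, rfl⟩

theorem ball_sdiff_closedBall_inv_subset_compl_zero (ρ : ℝ) :
    ball (0 : ℂ) ρ \ closedBall 0 ρ⁻¹ ⊆ {0}ᶜ := by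
  rintro w ⟨hwρ, hw⟩ rfl
  simp only [mem_ball, dist_self, mem_closedBall, not_le] at hwρ hw
  exact (inv_pos.2 hwρ).not_gt hw

theorem isOpen_canonicalEllipseRegion (ρ : ℝ) : IsOpen (canonicalEllipseRegion ρ) := by
  have hJ : AnalyticOnNhd ℂ joukowski {0}ᶜ :=
    differentiableOn_joukowski.analyticOnNhd isOpen_compl_singleton
  rw [canonicalEllipseRegion_eq_image]
  refine (hJ.is_constant_or_isOpen
    (isConnected_compl_singleton_of_one_lt_rank (by simp) 0).isPreconnected).resolve_left ?_ _
    (ball_sdiff_closedBall_inv_subset_compl_zero ρ) (isOpen_ball.sdiff isClosed_closedBall)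
  rintro ⟨c, hc⟩
  have h := (hc 1 one_ne_zero).trans (hc 2 two_ne_zero).symm
  norm_num [joukowski] at h

theorem DifferentiableOn.comp_joukowski {E : Type*} [NormedAddCommGroup E] [NormedSpace ℂ E]
    {ρ : ℝ} {f : ℂ → E} (hf : DifferentiableOn ℂ f (canonicalEllipseRegion ρ)) :
    DifferentiableOn ℂ (fun w => f (joukowski w)) (ball 0 ρ \ closedBall 0 ρ⁻¹) :=
  hf.comp (differentiableOn_joukowski.mono (ball_sdiff_closedBall_inv_subset_compl_zero ρ))
    (canonicalEllipseRegion_eq_image ρ ▸ mapsTo_image _ _)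

section CosSubstitution

variable {E : Type*} [NormedAddCommGroup E] [NormedSpace ℝ E]

theorem intervalIntegral_comp_cos_eq_setIntegral_Ioo (G : ℝ → E) :
    ∫ θ in 0..π, G (Real.cos θ) = ∫ x in Ioo (-1 : ℝ) 1, (√(1 - x ^ 2))⁻¹ • G x := by
  have himage : Real.cos '' Ioo 0 π = Ioo (-1) 1 := Real.cosPartialHomeomorph.image_source_eq_target
  rw [intervalIntegral.integral_of_le Real.pi_pos.le, integral_Ioc_eq_integral_Ioo, ← himage,
    integral_image_eq_integral_abs_deriv_smul measurableSet_Ioo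
      (fun θ _ => (Real.hasDerivAt_cos θ).hasDerivWithinAt)
      (Real.injOn_cos.mono Ioo_subset_Icc_self)]
  refine setIntegral_congr_fun measurableSet_Ioo fun θ hθ => ?_
  have hsin : 0 < Real.sin θ := Real.sin_pos_of_pos_of_lt_pi hθ.1 hθ.2
  rw [abs_neg, abs_of_pos hsin, ← Real.sin_sq, Real.sqrt_sq hsin.le, smul_smul,
    mul_inv_cancel₀ hsin.ne', one_smul]

theorem intervalIntegral_comp_cos_zero_two_pi {G : ℝ → E}
    (hG : IntervalIntegrable (fun θ => G (Real.cos θ)) volume 0 π) :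
    ∫ θ in 0..2 * π, G (Real.cos θ) = (2 : ℝ) • ∫ θ in 0..π, G (Real.cos θ) := by
  have hreflect := intervalIntegral.integral_comp_sub_left (fun θ => G (Real.cos θ)) (2 * π)
    (a := 0) (b := π)
  have hG' := hG.comp_sub_left (2 * π)
  simp only [Real.cos_two_pi_sub, sub_zero, show 2 * π - π = π by ring] at hreflect hG'
  rw [← intervalIntegral.integral_add_adjacent_intervals hG hG'.symm, ← hreflect, two_smul]

end CosSubstitution

theorem circleIntegral_inv_smul_comp_joukowski {E : Type*} [NormedAddCommGroup E]
    [NormedSpace ℂ E] (F : ℂ → E) :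
    (∮ w in C(0, 1), w⁻¹ • F (joukowski w)) = I • ∫ θ in 0..2 * π, F (Real.cos θ) := by
  simp only [circleIntegral, deriv_circleMap, circleMap_zero, ofReal_one, one_mul]
  rw [← intervalIntegral.integral_smul]
  refine intervalIntegral.integral_congr fun θ _ => ?_
  rw [joukowski_exp_mul_I, smul_smul, mul_right_comm, mul_inv_cancel₀ (exp_ne_zero _), one_mul,
    ofReal_cos]

theorem circleIntegral_inv_pow_mul_comp_joukowski {F : ℂ → ℂ}
    (hF : ContinuousOn (fun w => F (joukowski w)) (sphere 0 1)) (n : ℕ) :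
    (∮ w in C(0, 1), w⁻¹ ^ (n + 1) * F (joukowski w)) =
      I * ∫ θ in 0..2 * π, (Chebyshev.T ℂ n).eval (Real.cos θ : ℂ) * F (Real.cos θ) := by
  have hinv := circleIntegral_inv_radius 1 fun w => w⁻¹ ^ (n + 1) * F (joukowski w)
  simp only [inv_one, inv_inv, joukowski_inv, smul_eq_mul] at hinv
  have hne : ∀ w ∈ sphere (0 : ℂ) 1, w ≠ 0 := fun w hw => ne_zero_of_mem_sphere one_ne_zero ⟨w, hw⟩
  have hinv_cont : ContinuousOn (fun w : ℂ => w⁻¹) (sphere 0 1) := continuousOn_inv₀.mono hne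
  have hT := circleIntegral_inv_smul_comp_joukowski fun z => (Chebyshev.T ℂ n).eval z * F z
  simp only [smul_eq_mul] at hT
  have h₁ : CircleIntegrable (fun w => w⁻¹ ^ (n + 1) * F (joukowski w)) 0 1 :=
    ((hinv_cont.pow _).mul hF).circleIntegrable zero_le_one
  have h₂ : CircleIntegrable (fun w => w⁻¹ ^ 2 * (w ^ (n + 1) * F (joukowski w))) 0 1 :=
    ((hinv_cont.pow _).mul ((continuousOn_pow _).mul hF)).circleIntegrable zero_le_one
  calc (∮ w in C(0, 1), w⁻¹ ^ (n + 1) * F (joukowski w))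
      = 2⁻¹ * ((∮ w in C(0, 1), w⁻¹ ^ (n + 1) * F (joukowski w)) +
          ∮ w in C(0, 1), w⁻¹ ^ 2 * (w ^ (n + 1) * F (joukowski w))) := by rw [← hinv]; ring
    _ = ∮ w in C(0, 1), 2⁻¹ * (w⁻¹ ^ (n + 1) * F (joukowski w) +
          w⁻¹ ^ 2 * (w ^ (n + 1) * F (joukowski w))) := by
      rw [circleIntegral.integral_const_mul, circleIntegral.integral_add h₁ h₂]
    _ = ∮ w in C(0, 1), w⁻¹ * ((Chebyshev.T ℂ n).eval (joukowski w) * F (joukowski w)) :=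
      circleIntegral.integral_congr zero_le_one fun w hw => by
        have hw0 := hne w hw
        simp only [Chebyshev.T_eval_joukowski hw0, zpow_natCast, inv_pow]
        field_simp
        ring
    _ = _ := hT

theorem fourierChebyshevCoeff_eq_circleIntegral {f : ℂ → ℂ}
    (hf : ContinuousOn (fun w => f (joukowski w)) (sphere 0 1)) (k : ℕ) :
    fourierChebyshevCoeff f k = (if k = 0 then 1 else 2) *
      ((2 * π * I)⁻¹ * ∮ w in C(0, 1), w⁻¹ ^ (k + 1) * f (joukowski w)) := by
  have hcos : Continuous fun θ : ℝ => f (Real.cos θ) := by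
    have := hf.comp_continuous (continuous_circleMap 0 1) (circleMap_mem_sphere 0 zero_le_one)
    simpa [Function.comp_def, circleMap_zero, joukowski_exp_mul_I] using this
  have hG : Continuous fun θ : ℝ => (Chebyshev.T ℂ k).eval (Real.cos θ : ℂ) * f (Real.cos θ) :=
    ((Chebyshev.T ℂ k).continuous.comp (continuous_ofReal.comp Real.continuous_cos)).mul hcos
  rw [circleIntegral_inv_pow_mul_comp_joukowski hf,
    intervalIntegral_comp_cos_zero_two_pi (G := fun x : ℝ => (Chebyshev.T ℂ k).eval (x : ℂ) * f x)
      (hG.intervalIntegrable _ _),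
    intervalIntegral_comp_cos_eq_setIntegral_Ioo
      (fun x : ℝ => (Chebyshev.T ℂ k).eval (x : ℂ) * f x), fourierChebyshevCoeff]
  have hπ : (π : ℂ) ≠ 0 := ofReal_ne_zero.2 Real.pi_ne_zero
  have hweight : (∫ x in Ioo (-1 : ℝ) 1,
      f x * (Chebyshev.T ℂ k).eval (x : ℂ) / (√(1 - x ^ 2) : ℂ)) =
      ∫ x in Ioo (-1 : ℝ) 1, (√(1 - x ^ 2))⁻¹ • ((Chebyshev.T ℂ k).eval (x : ℂ) * f x) := by
    congr 1 with x
    rw [real_smul, ofReal_inv]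
    ring
  rw [hweight, real_smul, ofReal_ofNat]
  split_ifs <;> field_simp

noncomputable def joukowskiKernel (u w : ℂ) : ℂ := (w - u)⁻¹ + (w - u⁻¹)⁻¹ - w⁻¹

theorem two_pi_I_smul_comp_joukowski_eq_circleIntegral {E : Type*} [NormedAddCommGroup E]
    [NormedSpace ℂ E] [CompleteSpace E] {F : ℂ → E} {R : ℝ} {u : ℂ}
    (hF : DifferentiableOn ℂ (fun w => F (joukowski w)) (closedBall 0 R \ ball 0 R⁻¹))
    (hRu : R⁻¹ < ‖u‖) (huR : ‖u‖ < R) :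
    (2 * π * I : ℂ) • F (joukowski u) =
      ∮ w in C(0, R), joukowskiKernel u w • F (joukowski w) := by
  have hR : 0 < R := (norm_nonneg u).trans_lt huR
  have hu : 0 < ‖u‖ := (inv_pos.2 hR).trans hRu
  have hu₀ : u ≠ 0 := norm_pos_iff.1 hu
  have hu_inv : u⁻¹ ∉ sphere 0 R := by
    simpa [norm_inv] using ((inv_lt_comm₀ hu hR).2 hRu).ne
  have hu_sphere : u ∉ sphere 0 R := by simpa using huR.ne
  have h0 : (0 : ℂ) ∉ sphere 0 R := by simpa using hR.ne
  have hg : ContinuousOn (fun w => F (joukowski w)) (sphere 0 R) :=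
    hF.continuousOn.mono (sphere_subset_closedBall_sdiff_ball (hRu.trans huR).le le_rfl)
  -- the substitution `w ↦ w⁻¹` turns the inner circle of the annulus into the outer one
  have hinner : (∮ w in C(0, R), w⁻¹ ^ 2 • (w⁻¹ - u)⁻¹ • F (joukowski w)) =
      ∮ w in C(0, R), ((w - 0)⁻¹ - (w - u⁻¹)⁻¹) • F (joukowski w) :=
    circleIntegral.integral_congr hR.le fun w hw => by
      have hw₀ : w ≠ 0 := ne_of_mem_of_not_mem hw h0
      have hwu : w - u⁻¹ ≠ 0 := sub_ne_zero.2 (ne_of_mem_of_not_mem hw hu_inv)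
      have hwu' : w * u - 1 ≠ 0 := fun h => hwu (by
        field_simp
        linear_combination h)
      rw [sub_zero, smul_smul, show w⁻¹ - u = (w - u⁻¹) * (-u) * w⁻¹ by field_simp; ring]
      congr 1
      field_simp
      ring
  have hint₁ : CircleIntegrable (fun w => (w - u)⁻¹ • F (joukowski w)) 0 R :=
    ((continuousOn_sub_inv_sphere hu_sphere).smul hg).circleIntegrable hR.le
  have hint₂ : CircleIntegrable (fun w => ((w - 0)⁻¹ - (w - u⁻¹)⁻¹) • F (joukowski w)) 0 R :=
    (((continuousOn_sub_inv_sphere h0).sub (continuousOn_sub_inv_sphere hu_inv)).smul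
      hg).circleIntegrable hR.le
  rw [← circleIntegral_sub_inv_smul_sub_eq_of_differentiableOn_annulus (inv_pos.2 hR)
    (by simpa using hRu) (by simpa using huR) hF, circleIntegral_inv_radius]
  simp only [joukowski_inv]
  rw [hinner, ← circleIntegral.integral_sub hint₁ hint₂]
  refine circleIntegral.integral_congr hR.le fun w _ => ?_
  simp only [joukowskiKernel, sub_zero, ← sub_smul]
  congr 1
  ring

theorem inv_sub_eq_sum_add {K : Type*} [Field K] {a w : K} (hw : w ≠ 0) (hwa : w - a ≠ 0)
    (N : ℕ) :
    (w - a)⁻¹ = ∑ k ∈ Finset.range N, a ^ k * w⁻¹ ^ (k + 1) + a ^ N * w⁻¹ ^ N * (w - a)⁻¹ := by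
  induction N with
  | zero => simp
  | succ n ih =>
    conv_lhs => rw [ih]
    rw [Finset.sum_range_succ, add_assoc]
    congr 1
    simp only [inv_pow]
    field_simp
    ring

theorem joukowskiKernel_eq_sum_add {u w : ℂ} (hu : u ≠ 0) (hw : w ≠ 0) (hwu : w - u ≠ 0)
    (hwu' : w - u⁻¹ ≠ 0) {N : ℕ} (hN : 0 < N) :
    joukowskiKernel u w = ∑ k ∈ Finset.range N,
        (if k = 0 then 1 else 2) * (Chebyshev.T ℂ k).eval (joukowski u) * w⁻¹ ^ (k + 1) +
      (u ^ N * (w - u)⁻¹ + u⁻¹ ^ N * (w - u⁻¹)⁻¹) * w⁻¹ ^ N := by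
  have hterm : ∀ k ∈ Finset.range N,
      (if k = 0 then 1 else 2) * (Chebyshev.T ℂ k).eval (joukowski u) * w⁻¹ ^ (k + 1) =
        u ^ k * w⁻¹ ^ (k + 1) + u⁻¹ ^ k * w⁻¹ ^ (k + 1) - if k = 0 then w⁻¹ else 0 := by
    intro k _
    rw [Chebyshev.T_eval_joukowski hu, zpow_natCast, zpow_natCast]
    split_ifs with hk
    · subst hk; ring
    · ring
  conv_lhs => rw [joukowskiKernel, inv_sub_eq_sum_add hw hwu N, inv_sub_eq_sum_add hw hwu' N]
  rw [Finset.sum_congr rfl hterm, Finset.sum_sub_distrib, Finset.sum_add_distrib,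
    Finset.sum_ite_eq', if_pos (Finset.mem_range.2 hN)]
  ring

theorem norm_pow_mul_sub_inv_le {a w : ℂ} {s : ℝ} (ha : ‖a‖ ≤ s) (hsw : s < ‖w‖) (N : ℕ) :
    ‖a ^ N * (w - a)⁻¹‖ ≤ s ^ N / (‖w‖ - s) := by
  rw [norm_mul, norm_pow, norm_inv, ← div_eq_mul_inv]
  exact div_le_div₀ (pow_nonneg ((norm_nonneg a).trans ha) N)
    (pow_le_pow_left₀ (norm_nonneg a) ha N) (sub_pos.2 hsw)
    ((sub_le_sub_left ha _).trans (norm_sub_norm_le w a))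

section PartialSums

variable {f : ℂ → ℂ} {r : ℝ}

theorem fourierChebyshevCoeff_eq_circleIntegral_of_differentiableOn (hr : 1 ≤ r)
    (hf : DifferentiableOn ℂ (fun w => f (joukowski w)) (closedBall 0 r \ ball 0 r⁻¹)) (k : ℕ) :
    fourierChebyshevCoeff f k = (if k = 0 then 1 else 2) *
      ((2 * π * I)⁻¹ * ∮ w in C(0, r), w⁻¹ ^ (k + 1) * f (joukowski w)) := by
  have hsub : closedBall (0 : ℂ) r \ ball 0 1 ⊆ closedBall 0 r \ ball 0 r⁻¹ :=
    sdiff_subset_sdiff subset_rfl (ball_subset_ball (inv_le_one_of_one_le₀ hr))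
  have hd : DifferentiableOn ℂ (fun w => w⁻¹ ^ (k + 1) * f (joukowski w))
      (closedBall 0 r \ ball 0 1) := by
    refine ((differentiableOn_inv.mono fun w hw => ?_).pow _).mul (hf.mono hsub)
    rintro rfl
    simp at hw
  rw [circleIntegral_eq_of_differentiable_on_annulus_off_countable one_pos hr countable_empty
    hd.continuousOn fun z hz => hd.differentiableAt (closedBall_sdiff_ball_mem_nhds hz.1)]
  exact fourierChebyshevCoeff_eq_circleIntegral
    (hf.continuousOn.mono (sphere_subset_closedBall_sdiff_ball (inv_le_one_of_one_le₀ hr) hr)) k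

theorem two_pi_I_mul_partialSum_eq_circleIntegral (hr : 1 ≤ r)
    (hf : DifferentiableOn ℂ (fun w => f (joukowski w)) (closedBall 0 r \ ball 0 r⁻¹))
    (z : ℂ) (N : ℕ) :
    2 * π * I * ∑ k ∈ Finset.range N, fourierChebyshevCoeff f k * (Chebyshev.T ℂ k).eval z =
      ∮ w in C(0, r), (∑ k ∈ Finset.range N,
        (if k = 0 then 1 else 2) * (Chebyshev.T ℂ k).eval z * w⁻¹ ^ (k + 1)) * f (joukowski w) := by
  have hr₀ : 0 < r := one_pos.trans_le hr
  have hinv : ContinuousOn (fun w : ℂ => w⁻¹) (sphere 0 r) := by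
    simpa using continuousOn_sub_inv_sphere (a := 0) (by simpa using hr₀.ne)
  have hint : ∀ k ∈ Finset.range N, CircleIntegrable (fun w => (if k = 0 then 1 else 2) *
      (Chebyshev.T ℂ k).eval z * w⁻¹ ^ (k + 1) * f (joukowski w)) 0 r :=
    fun k _ => ((continuousOn_const.mul (hinv.pow _)).mul (hf.continuousOn.mono
      (sphere_subset_closedBall_sdiff_ball ((inv_le_one_of_one_le₀ hr).trans hr) le_rfl)))
      |>.circleIntegrable hr₀.le
  simp only [Finset.sum_mul]
  rw [circleIntegral.integral_fun_sum hint, Finset.mul_sum]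
  refine Finset.sum_congr rfl fun k _ => ?_
  simp only [fourierChebyshevCoeff_eq_circleIntegral_of_differentiableOn hr hf k, mul_assoc,
    circleIntegral.integral_const_mul]
  field_simp

theorem two_pi_I_mul_sub_partialSum_eq
    (hf : DifferentiableOn ℂ (fun w => f (joukowski w)) (closedBall 0 r \ ball 0 r⁻¹))
    {u : ℂ} (hu : 1 ≤ ‖u‖) (hur : ‖u‖ < r) {N : ℕ} (hN : 0 < N) :
    2 * π * I * (f (joukowski u) - ∑ k ∈ Finset.range N,
        fourierChebyshevCoeff f k * (Chebyshev.T ℂ k).eval (joukowski u)) =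
      ∮ w in C(0, r), (u ^ N * (w - u)⁻¹ + u⁻¹ ^ N * (w - u⁻¹)⁻¹) * w⁻¹ ^ N *
        f (joukowski w) := by
  have hr : 1 < r := hu.trans_lt hur
  have hr₀ : 0 < r := one_pos.trans hr
  have hu₀ : u ≠ 0 := norm_pos_iff.1 (one_pos.trans_le hu)
  have hu_inv : u⁻¹ ∉ sphere 0 r := by
    simpa [norm_inv] using ((inv_le_one_of_one_le₀ hu).trans_lt hr).ne
  have hu_sphere : u ∉ sphere 0 r := by simpa using hur.ne
  have h0 : (0 : ℂ) ∉ sphere 0 r := by simpa using hr₀.ne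
  have hg : ContinuousOn (fun w => f (joukowski w)) (sphere 0 r) :=
    hf.continuousOn.mono (sphere_subset_closedBall_sdiff_ball
      ((inv_le_one_of_one_le₀ hr.le).trans hr.le) le_rfl)
  have hinv : ContinuousOn (fun w : ℂ => w⁻¹) (sphere 0 r) := by
    simpa using continuousOn_sub_inv_sphere h0
  have hrep := two_pi_I_smul_comp_joukowski_eq_circleIntegral hf
    ((inv_lt_one_of_one_lt₀ hr).trans_le hu) hur
  simp only [smul_eq_mul] at hrep
  have hintK : CircleIntegrable (fun w => joukowskiKernel u w * f (joukowski w)) 0 r :=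
    ((((continuousOn_sub_inv_sphere hu_sphere).add (continuousOn_sub_inv_sphere hu_inv)).sub
      hinv).mul hg).circleIntegrable hr₀.le
  have hintP : CircleIntegrable (fun w => (∑ k ∈ Finset.range N, (if k = 0 then 1 else 2) *
      (Chebyshev.T ℂ k).eval (joukowski u) * w⁻¹ ^ (k + 1)) * f (joukowski w)) 0 r :=
    ((continuousOn_finsetSum _ fun k _ => continuousOn_const.mul (hinv.pow _)).mul
      hg).circleIntegrable hr₀.le
  rw [mul_sub, hrep, two_pi_I_mul_partialSum_eq_circleIntegral hr.le hf,
    ← circleIntegral.integral_sub hintK hintP]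
  refine circleIntegral.integral_congr hr₀.le fun w hw => ?_
  rw [joukowskiKernel_eq_sum_add hu₀ (ne_of_mem_of_not_mem hw h0)
    (sub_ne_zero.2 (ne_of_mem_of_not_mem hw hu_sphere))
    (sub_ne_zero.2 (ne_of_mem_of_not_mem hw hu_inv)) hN]
  ring

theorem norm_sub_partialSum_le
    (hf : DifferentiableOn ℂ (fun w => f (joukowski w)) (closedBall 0 r \ ball 0 r⁻¹))
    {M s : ℝ} (hM : ∀ w ∈ sphere (0 : ℂ) r, ‖f (joukowski w)‖ ≤ M) (hsr : s < r)
    {u : ℂ} (hu : 1 ≤ ‖u‖) (hus : ‖u‖ ≤ s) {N : ℕ} (hN : 0 < N) :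
    ‖f (joukowski u) - ∑ k ∈ Finset.range N,
        fourierChebyshevCoeff f k * (Chebyshev.T ℂ k).eval (joukowski u)‖ ≤
      2 * r * M / (r - s) * (s / r) ^ N := by
  have hs : 1 ≤ s := hu.trans hus
  have hr₀ : 0 < r := one_pos.trans (hs.trans_lt hsr)
  have hrs : 0 < r - s := sub_pos.2 hsr
  have hu' : ‖u⁻¹‖ ≤ s := by
    rw [norm_inv]
    exact (inv_le_one_of_one_le₀ hu).trans hs
  have hbound : ∀ w ∈ sphere (0 : ℂ) r,
      ‖(u ^ N * (w - u)⁻¹ + u⁻¹ ^ N * (w - u⁻¹)⁻¹) * w⁻¹ ^ N * f (joukowski w)‖ ≤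
        2 * (s ^ N / (r - s)) * r⁻¹ ^ N * M := by
    intro w hw
    have hw' : ‖w‖ = r := by simpa using hw
    have h₁ := norm_pow_mul_sub_inv_le hus (hw' ▸ hsr) N
    have h₂ := norm_pow_mul_sub_inv_le hu' (hw' ▸ hsr) N
    rw [hw'] at h₁ h₂
    rw [norm_mul, norm_mul, norm_pow, norm_inv, hw']
    refine mul_le_mul (mul_le_mul_of_nonneg_right ?_ (by positivity)) (hM w hw) (norm_nonneg _)
      (mul_nonneg (mul_nonneg zero_le_two (div_nonneg (by positivity) hrs.le)) (by positivity))
    linarith [norm_add_le (u ^ N * (w - u)⁻¹) (u⁻¹ ^ N * (w - u⁻¹)⁻¹)]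
  have h := circleIntegral.norm_integral_le_of_norm_le_const hr₀.le hbound
  rw [← two_pi_I_mul_sub_partialSum_eq hf hu (hus.trans_lt hsr) hN, norm_mul] at h
  have h2π : ‖(2 * π * I : ℂ)‖ = 2 * π := by simp [Real.pi_pos.le]
  rw [h2π, mul_assoc (2 * π)] at h
  refine (le_of_mul_le_mul_left h (by positivity)).trans_eq ?_
  field_simp
  ring

theorem tendstoUniformlyOn_partialSum_canonicalEllipseRegion {s : ℝ} (hs : 1 ≤ s) (hsr : s < r)
    (hf : DifferentiableOn ℂ (fun w => f (joukowski w)) (closedBall 0 r \ ball 0 r⁻¹)) :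
    TendstoUniformlyOn (fun N z => ∑ k ∈ Finset.range N,
        fourierChebyshevCoeff f k * (Chebyshev.T ℂ k).eval z) f atTop
      (canonicalEllipseRegion s) := by
  have hr : 1 ≤ r := hs.trans hsr.le
  obtain ⟨M, hM⟩ := (isCompact_sphere (0 : ℂ) r).exists_bound_of_continuousOn
    (hf.continuousOn.mono (sphere_subset_closedBall_sdiff_ball
      ((inv_le_one_of_one_le₀ hr).trans hr) le_rfl))
  have hgeom : Tendsto (fun N : ℕ => 2 * r * M / (r - s) * (s / r) ^ N) atTop (𝓝 0) := by
    simpa using (tendsto_pow_atTop_nhds_zero_of_lt_one (by positivity)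
      ((div_lt_one (one_pos.trans_le hr)).2 hsr)).const_mul (2 * r * M / (r - s))
  rw [Metric.tendstoUniformlyOn_iff]
  intro ε hε
  filter_upwards [hgeom.eventually_lt_const hε, eventually_gt_atTop 0] with N hNε hN z hz
  obtain ⟨u, hu, hus, rfl⟩ := mem_canonicalEllipseRegion_iff.1 hz
  rw [dist_eq_norm]
  exact (norm_sub_partialSum_le hf hM hsr hu hus.le hN).trans_lt hNε

end PartialSums

theorem fourierChebyshev_series_tendstoLocallyUniformlyOn_general (ρ : ℝ)
    (f : ℂ → ℂ) (hf : DifferentiableOn ℂ f (canonicalEllipseRegion ρ)) :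
    TendstoLocallyUniformlyOn
      (fun N : ℕ => fun z : ℂ =>
        ∑ k ∈ Finset.range N,
          fourierChebyshevCoeff f k * (Polynomial.Chebyshev.T ℂ (k : ℤ)).eval z)
      f Filter.atTop (canonicalEllipseRegion ρ) := by
  refine tendstoLocallyUniformlyOn_of_forall_exists_nhds fun z hz => ?_
  obtain ⟨u, hu, huρ, rfl⟩ := mem_canonicalEllipseRegion_iff.1 hz
  obtain ⟨s, hus, hsρ⟩ := exists_between huρ
  obtain ⟨r, hsr, hrρ⟩ := exists_between hsρ
  have hr₀ : 0 < r := ((one_pos.trans_le hu).trans hus).trans hsr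
  have hannulus : closedBall (0 : ℂ) r \ ball 0 r⁻¹ ⊆ ball 0 ρ \ closedBall 0 ρ⁻¹ :=
    sdiff_subset_sdiff (closedBall_subset_ball hrρ)
      (closedBall_subset_ball (inv_strictAnti₀ hr₀ hrρ))
  refine ⟨canonicalEllipseRegion s, mem_nhdsWithin_of_mem_nhds ?_,
    tendstoUniformlyOn_partialSum_canonicalEllipseRegion (hu.trans hus.le) hsr
      (hf.comp_joukowski.mono hannulus)⟩
  exact (isOpen_canonicalEllipseRegion s).mem_nhds
    (mem_canonicalEllipseRegion_iff.2 ⟨u, hu, hus, rfl⟩)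

/-- If `f` is holomorphic on the open canonical ellipse region of index `ρ > 1`,
then its Fourier–Chebyshev series `Σ_k c_k T_k(z)` converges to `f` locally uniformly
(uniformly on every compact subset) on that region. -/
theorem fourierChebyshev_series_tendstoLocallyUniformlyOn (ρ : ℝ) (hρ : 1 < ρ)
    (f : ℂ → ℂ) (hf : DifferentiableOn ℂ f (canonicalEllipseRegion ρ)) :
    TendstoLocallyUniformlyOn
      (fun N : ℕ => fun z : ℂ =>
        ∑ k ∈ Finset.range N,
          fourierChebyshevCoeff f k * (Polynomial.Chebyshev.T ℂ (k : ℤ)).eval z)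
      f Filter.atTop (canonicalEllipseRegion ρ) :=
  fourierChebyshev_series_tendstoLocallyUniformlyOn_general ρ f hf
end

section
/- Let b ∈ ℂ with Im b > 0, and let S ⊂ ℂ be the closed straight segment joining the conjugate point b̄ to b (a vertical segment, symmetric with respect to the real axis). Then there exists a holomorphic function g on ℂ \ S such that g(z)² = (z − b)(z − b̄) for all z ∈ ℂ \ S, and g takes real values at every real point of ℂ \ S. (Thus the two-valued algebraic function √((z−b)(z−b̄)) admits a single-valued holomorphic branch, real on the real axis off the cut, in the complement of the segment S joining its two branch points; this is the sense in which such a function extends single-valuedly from [−1,1] to the complement of an admissible compact.) -/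
/-!
With `w = z - Re b` and `c = Im b` we have `(z - b)(z - b̄) = w² + c² = w² (1 + c²/w²)`.
The radicand `1 + c²/w²` is real and `≤ 0` only when `w² ∈ [-c², 0)`, i.e. when `w` lies on the
cut `[-ic, ic]`. Hence `w · √(1 + c²/w²)`, with the principal square root, is holomorphic off the
cut, and it is real at real `w` because there the radicand is at least `1`.
-/

open Complex

theorem ofReal_mul_I_mem_segment {c t : ℝ} (ht : |t| ≤ |c|) :
    (t : ℂ) * I ∈ segment ℝ (-(c * I)) (c * I) := by
  have himage := image_segment ℝ (LinearMap.toSpanSingleton ℝ ℂ I).toAffineMap (-c) c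
  simp only [LinearMap.coe_toAffineMap, LinearMap.toSpanSingleton_apply, neg_smul,
    Complex.real_smul] at himage
  rw [← himage, segment_eq_uIcc]
  refine ⟨t, ?_, by simp⟩
  rcases le_total 0 c with hc | hc
  · rw [abs_of_nonneg hc, abs_le] at ht
    rwa [Set.uIcc_of_le (by linarith)]
  · rw [abs_of_nonpos hc, abs_le] at ht
    rw [Set.uIcc_of_ge (by linarith)]
    constructor <;> linarith [ht.1, ht.2]

theorem ne_zero_of_notMem_segment_neg_mul_I {c : ℝ} {w : ℂ}
    (hw : w ∉ segment ℝ (-(c * I)) (c * I)) : w ≠ 0 := by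
  rintro rfl
  exact hw (by simpa using ofReal_mul_I_mem_segment (c := c) (t := 0) (by simp))

theorem one_add_sq_div_sq_mem_slitPlane (c : ℝ) {w : ℂ}
    (hw : w ∉ segment ℝ (-(c * I)) (c * I)) : 1 + (c : ℂ) ^ 2 / w ^ 2 ∈ slitPlane := by
  by_contra hv
  rw [mem_slitPlane_iff, not_or, not_lt, not_not] at hv
  set r := (c : ℂ) ^ 2 / w ^ 2 with hr
  have hcr : (c : ℂ) ^ 2 = r * w ^ 2 := by
    rw [hr, div_mul_cancel₀ _ (pow_ne_zero 2 (ne_zero_of_notMem_segment_neg_mul_I hw))]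
  have hr_re : r.re ≤ -1 := by simp only [add_re, one_re] at hv; linarith [hv.1]
  have hr_im : r.im = 0 := by simpa using hv.2
  have h_re := congrArg re hcr
  have h_im := congrArg im hcr
  simp only [ofReal_re, ofReal_im, sq, mul_re, mul_im, hr_im] at h_re h_im
  -- `c² = r w²` with `r ≤ -1` real: `w` cannot be real and nonzero, so it is imaginary.
  have hxy : w.re * w.im = 0 := by
    have : r.re * (w.re * w.im) = 0 := by linarith
    exact (mul_eq_zero.mp this).resolve_left (by linarith)
  have hw_re : w.re = 0 := by
    rcases mul_eq_zero.mp hxy with hx | hy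
    · exact hx
    · rw [hy] at h_re
      exact mul_self_eq_zero.mp (by nlinarith [mul_self_nonneg c, mul_self_nonneg w.re])
  apply hw
  rw [← re_add_im w, hw_re, ofReal_zero, zero_add]
  refine ofReal_mul_I_mem_segment (sq_le_sq.mp ?_)
  rw [hw_re] at h_re
  nlinarith [mul_nonneg (by linarith : 0 ≤ -1 - r.re) (mul_self_nonneg w.im)]

noncomputable def sqrtSqAddSq (c : ℝ) (w : ℂ) : ℂ := w * Complex.sqrt (1 + c ^ 2 / w ^ 2)

theorem differentiableOn_sqrtSqAddSq (c : ℝ) :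
    DifferentiableOn ℂ (sqrtSqAddSq c) (segment ℝ (-(c * I)) (c * I))ᶜ := by
  intro w hw
  have hw0 : w ^ 2 ≠ 0 := pow_ne_zero 2 (ne_zero_of_notMem_segment_neg_mul_I hw)
  have hradicand : DifferentiableAt ℂ (fun w : ℂ => 1 + (c : ℂ) ^ 2 / w ^ 2) w := by
    fun_prop (disch := exact hw0)
  exact (differentiableAt_id.mul ((differentiableAt_sqrt
    (one_add_sq_div_sq_mem_slitPlane c hw)).comp w hradicand)).differentiableWithinAt

theorem sqrtSqAddSq_sq (c : ℝ) {w : ℂ} (hw : w ≠ 0) : sqrtSqAddSq c w ^ 2 = w ^ 2 + c ^ 2 := by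
  rw [sqrtSqAddSq, mul_pow, Complex.sqrt, cpow_ofNat_inv_pow]
  field_simp

theorem sqrtSqAddSq_ofReal_im (c x : ℝ) : (sqrtSqAddSq c x).im = 0 := by
  have h : 1 + (c : ℂ) ^ 2 / (x : ℂ) ^ 2 = ((1 + c ^ 2 / x ^ 2 : ℝ) : ℂ) := by push_cast; rfl
  rw [sqrtSqAddSq, h, Complex.sqrt_of_nonneg (Complex.zero_le_real.mpr (by positivity))]
  simp

theorem mem_segment_conj_iff {b z : ℂ} :
    z ∈ segment ℝ (starRingEnd ℂ b) b ↔ z - b.re ∈ segment ℝ (-(b.im * I)) (b.im * I) := by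
  have hconj : starRingEnd ℂ b = b.re + -(b.im * I) := by apply Complex.ext <;> simp
  have h := mem_segment_translate ℝ (b.re : ℂ) (x := z - b.re) (b := -(b.im * I)) (c := b.im * I)
  rwa [add_sub_cancel, ← hconj, re_add_im] at h

theorem sub_mul_sub_conj (b z : ℂ) :
    (z - b) * (z - starRingEnd ℂ b) = (z - b.re) ^ 2 + (b.im : ℂ) ^ 2 := by
  apply Complex.ext <;> simp [sq] <;> ring

theorem exists_holomorphic_sqrt_branch_general (b : ℂ) :
    ∃ g : ℂ → ℂ,
      DifferentiableOn ℂ g (segment ℝ (starRingEnd ℂ b) b)ᶜ ∧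
      (∀ z ∈ (segment ℝ (starRingEnd ℂ b) b)ᶜ,
        g z ^ 2 = (z - b) * (z - starRingEnd ℂ b)) ∧
      (∀ x : ℝ, (x : ℂ) ∈ (segment ℝ (starRingEnd ℂ b) b)ᶜ → (g (x : ℂ)).im = 0) := by
  refine ⟨fun z => sqrtSqAddSq b.im (z - b.re), ?_, fun z hz => ?_, fun x _ => ?_⟩
  · exact (differentiableOn_sqrtSqAddSq b.im).comp (by fun_prop)
      fun z hz => mt mem_segment_conj_iff.mpr hz
  · rw [sub_mul_sub_conj, sqrtSqAddSq_sq _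
      (ne_zero_of_notMem_segment_neg_mul_I (mt mem_segment_conj_iff.mpr hz))]
  · simpa using sqrtSqAddSq_ofReal_im b.im (x - b.re)

/-- For `b ∈ ℂ` with `Im b > 0` and `S` the closed segment joining `b̄` to `b`,
there is a holomorphic function `g` on `ℂ \ S` with `g(z)² = (z - b)(z - b̄)`
for all `z ∉ S`, taking real values at every real point off `S`:
a single-valued holomorphic branch of `√((z-b)(z-b̄))`, real on the real axis. -/
theorem exists_holomorphic_sqrt_branch (b : ℂ) (hb : 0 < b.im) :
    ∃ g : ℂ → ℂ,
      DifferentiableOn ℂ g (segment ℝ (starRingEnd ℂ b) b)ᶜ ∧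
      (∀ z ∈ (segment ℝ (starRingEnd ℂ b) b)ᶜ,
        g z ^ 2 = (z - b) * (z - starRingEnd ℂ b)) ∧
      (∀ x : ℝ, (x : ℂ) ∈ (segment ℝ (starRingEnd ℂ b) b)ᶜ → (g (x : ℂ)).im = 0) :=
  exists_holomorphic_sqrt_branch_general b
end
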